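/- Laplace's method leading order: if f:[a,b]→ℝ is continuous with a unique strict minimum at an interior point c, and f is twice differentiable at c with f''(c)>0, then as ε→0⁺, the integral ∫_a^b e^{-f(x)/ε} dx is asymptotic to e^{-f(c)/ε} · sqrt(2πε/f''(c)), i.e., the ratio tends to 1. -/

import Mathlib

/-!
Write `g = f - f c` and `k = f''(c) / 2`, so that `g x = k (x - c)² + o((x - c)²)` and `g > 0`
away from `c`. For `0 < η < k` there is an interval `[l, u] ∋ c` on which
`(k - η)(x - c)² ≤ g x ≤ (k + η)(x - c)²`, and by compactness `g ≥ m > 0` on the rest of `[a, b]`.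
So `∫ₐᵇ e^{-g/ε} / √ε` lies between a truncated Gaussian integral, which tends to `√(π/(k+η))`,
and `√(π/(k-η)) + (b - a) e^{-m/ε} / √ε`, which tends to `√(π/(k-η))`. Letting `η → 0` gives
`∫ₐᵇ e^{-g/ε} ~ √(πε/k)`.
-/

open Set Real Filter Topology MeasureTheory Asymptotics

theorem tendsto_of_forall_eventually_squeezed {ι β α : Type*} [LinearOrder α] [TopologicalSpace α]
    [OrderTopology α] {p : Filter ι} [p.NeBot] {l : Filter β} {F : β → α} {L U : ι → α} {y : α}
    (hL : Tendsto L p (𝓝 y)) (hU : Tendsto U p (𝓝 y))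
    (hF : ∀ᶠ i in p, ∃ lo up : β → α, Tendsto lo l (𝓝 (L i)) ∧ Tendsto up l (𝓝 (U i)) ∧
      ∀ᶠ x in l, lo x ≤ F x ∧ F x ≤ up x) :
    Tendsto F l (𝓝 y) := by
  refine tendsto_order.2 ⟨fun θ hθ => ?_, fun θ hθ => ?_⟩
  · obtain ⟨i, hθi, lo, _, hlo, _, hle⟩ := ((hL.eventually (lt_mem_nhds hθ)).and hF).exists
    filter_upwards [hlo.eventually (lt_mem_nhds hθi), hle] with x hx hxF
    exact hx.trans_le hxF.1
  · obtain ⟨i, hθi, _, up, _, hup, hle⟩ := ((hU.eventually (gt_mem_nhds hθ)).and hF).exists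
    filter_upwards [hup.eventually (gt_mem_nhds hθi), hle] with x hx hxF
    exact hxF.2.trans_lt hx

theorem isLittleO_sub_sub_half_mul_sq {f : ℝ → ℝ} {c A : ℝ}
    (hf : ∀ᶠ x in 𝓝 c, HasDerivAt f (deriv f x) x) (hc : deriv f c = 0)
    (hA : HasDerivAt (deriv f) A c) :
    (fun x => f x - f c - A / 2 * (x - c) ^ 2) =o[𝓝 c] fun x => (x - c) ^ 2 := by
  obtain ⟨r, hr, hball⟩ := Metric.eventually_nhds_iff_ball.1 hf
  have hquad (x : ℝ) : HasDerivAt (fun x => A / 2 * (x - c) ^ 2) (A * (x - c)) x :=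
    (((hasDerivAt_id x).sub_const c).pow 2).const_mul (A / 2)
      |>.congr_deriv (by simp only [id]; ring)
  have hA' : (fun x => deriv f x - A * (x - c)) =o[𝓝 c] fun x => (x - c) ^ 1 := by
    simpa [hc, mul_comm] using hasDerivAt_iff_isLittleO.1 hA
  have h := (convex_ball c r).isLittleO_pow_succ_real (Metric.mem_ball_self hr)
    (fun x hx => ((hball x hx).sub (hquad x)).hasDerivWithinAt)
    (hA'.mono nhdsWithin_le_nhds)
  rw [nhdsWithin_eq_nhds.2 (Metric.isOpen_ball.mem_nhds (Metric.mem_ball_self hr))] at h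
  refine h.congr_left fun x => ?_
  simp only [Pi.sub_apply]
  ring

theorem ContDiffOn.isLittleO_sub_sub_half_deriv_deriv_mul_sq {f : ℝ → ℝ} {s : Set ℝ} {c : ℝ}
    (hf : ContDiffOn ℝ 2 f s) (hs : IsOpen s) (hcs : c ∈ s) (hc : deriv f c = 0) :
    (fun x => f x - f c - deriv (deriv f) c / 2 * (x - c) ^ 2) =o[𝓝 c]
      fun x => (x - c) ^ 2 := by
  have hf' := hf.deriv_of_isOpen (m := 1) hs (by norm_num)
  refine isLittleO_sub_sub_half_mul_sq ?_ hc
    ((hf'.differentiableOn one_ne_zero).differentiableAt (hs.mem_nhds hcs)).hasDerivAt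
  filter_upwards [hs.mem_nhds hcs] with x hx
  exact ((hf.differentiableOn two_ne_zero).differentiableAt (hs.mem_nhds hx)).hasDerivAt

theorem exists_Icc_abs_sub_le_of_isLittleO {g : ℝ → ℝ} {c k η : ℝ} {s : Set ℝ} (hs : s ∈ 𝓝 c)
    (hg : (fun x => g x - k * (x - c) ^ 2) =o[𝓝 c] fun x => (x - c) ^ 2) (hη : 0 < η) :
    ∃ l u, c ∈ Ioo l u ∧ Icc l u ⊆ s ∧
      ∀ x ∈ Icc l u, |g x - k * (x - c) ^ 2| ≤ η * (x - c) ^ 2 := by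
  obtain ⟨δ, hδ, hball⟩ := Metric.mem_nhds_iff.1 (inter_mem hs (hg.def hη))
  have hsub : Icc (c - δ / 2) (c + δ / 2) ⊆
      s ∩ {x | ‖g x - k * (x - c) ^ 2‖ ≤ η * ‖(x - c) ^ 2‖} := by
    rw [← Real.closedBall_eq_Icc]
    exact (Metric.closedBall_subset_ball (half_lt_self hδ)).trans hball
  refine ⟨c - δ / 2, c + δ / 2, ⟨by linarith, by linarith⟩, fun x hx => (hsub hx).1,
    fun x hx => ?_⟩
  simpa [abs_of_nonneg (sq_nonneg (x - c))] using (hsub hx).2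

theorem integral_exp_neg_mul_sub_sq_div {k : ℝ} (hk : 0 < k) (ε c : ℝ) :
    ∫ x, exp (-(k * (x - c) ^ 2) / ε) = √(π / k) * √ε := by
  calc ∫ x, exp (-(k * (x - c) ^ 2) / ε) = ∫ x, exp (-(k / ε) * x ^ 2) := by
        rw [← integral_sub_right_eq_self (fun x => exp (-(k / ε) * x ^ 2)) c]
        congr with x
        ring_nf
    _ = √(π / k) * √ε := by
        rw [integral_gaussian, ← Real.sqrt_mul (div_pos pi_pos hk).le, div_div_eq_mul_div,
          mul_div_right_comm]

theorem integrable_exp_neg_mul_sub_sq_div {k ε : ℝ} (hk : 0 < k) (hε : 0 < ε) (c : ℝ) :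
    Integrable fun x => exp (-(k * (x - c) ^ 2) / ε) := by
  refine ((integrable_exp_neg_mul_sq (div_pos hk hε)).comp_sub_right c).congr
    (ae_of_all _ fun x => ?_)
  ring_nf

theorem tendsto_intervalIntegral_gaussian_div_sqrt {k c l u : ℝ} (hk : 0 < k) (hl : l < c)
    (hu : c < u) :
    Tendsto (fun ε => (∫ x in l..u, exp (-(k * (x - c) ^ 2) / ε)) / √ε) (𝓝[>] 0)
      (𝓝 √(π / k)) := by
  have hinv : Tendsto (fun ε : ℝ => (√ε)⁻¹) (𝓝[>] 0) atTop :=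
    (tendsto_sqrt_atTop.comp tendsto_inv_nhdsGT_zero).congr fun ε => Real.sqrt_inv ε
  have hlim := intervalIntegral_tendsto_integral (integrable_exp_neg_mul_sq hk)
    (hinv.const_mul_atTop_of_neg (sub_neg.2 hl)) (hinv.const_mul_atTop (sub_pos.2 hu))
  rw [integral_gaussian] at hlim
  refine hlim.congr' ?_
  filter_upwards [self_mem_nhdsWithin] with ε (hε : 0 < ε)
  have hs : √ε ≠ 0 := (Real.sqrt_pos.2 hε).ne'
  -- substitute `x = √ε * z + c`
  have := intervalIntegral.integral_comp_mul_add (fun x => exp (-(k * (x - c) ^ 2) / ε)) hs c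
    (a := (l - c) * (√ε)⁻¹) (b := (u - c) * (√ε)⁻¹)
  have hsq : (√ε) ^ 2 = ε := Real.sq_sqrt hε.le
  have hend : ∀ t, √ε * ((t - c) * (√ε)⁻¹) + c = t := fun t => by field_simp; ring
  simp only [add_sub_cancel_right, mul_pow, hsq, hend, smul_eq_mul] at this
  rw [div_eq_inv_mul, ← this]
  congr 1 with x
  field_simp

theorem tendsto_exp_neg_div_div_sqrt_nhdsGT_zero {m : ℝ} (hm : 0 < m) :
    Tendsto (fun ε => exp (-m / ε) / √ε) (𝓝[>] 0) (𝓝 0) := by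
  refine ((tendsto_rpow_mul_exp_neg_mul_atTop_nhds_zero (1 / 2) m hm).comp
    tendsto_inv_nhdsGT_zero).congr fun ε => ?_
  rw [Function.comp_apply, ← Real.sqrt_eq_rpow, Real.sqrt_inv, div_eq_mul_inv, neg_div,
    neg_mul, div_eq_mul_inv, mul_comm]

theorem intervalIntegral_gaussian_le_integral_exp_neg_div {g : ℝ → ℝ} {a b c k l u ε : ℝ}
    (hal : a ≤ l) (hlu : l ≤ u) (hub : u ≤ b) (hg : ContinuousOn g (Icc a b)) (hε : 0 < ε)
    (hbound : ∀ x ∈ Icc l u, g x ≤ k * (x - c) ^ 2) :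
    ∫ x in l..u, exp (-(k * (x - c) ^ 2) / ε) ≤ ∫ x in a..b, exp (-g x / ε) := by
  have hG : ContinuousOn (fun x => exp (-g x / ε)) (Icc a b) := (hg.neg.div_const ε).rexp
  calc ∫ x in l..u, exp (-(k * (x - c) ^ 2) / ε) ≤ ∫ x in l..u, exp (-g x / ε) :=
        intervalIntegral.integral_mono_on hlu (Continuous.intervalIntegrable (by fun_prop) _ _)
          ((hG.mono (Icc_subset_Icc hal hub)).intervalIntegrable_of_Icc hlu)
          fun x hx => exp_le_exp.2 (by gcongr; exact hbound x hx)
    _ ≤ ∫ x in a..b, exp (-g x / ε) :=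
        intervalIntegral.integral_mono_interval hal hlu hub
          (ae_of_all _ fun x => (exp_pos _).le)
          (hG.intervalIntegrable_of_Icc (hal.trans (hlu.trans hub)))

theorem integral_exp_neg_div_le_gaussian_add_tail {g : ℝ → ℝ} {a b c k m ε : ℝ} (hab : a ≤ b)
    (hg : ContinuousOn g (Icc a b)) (hk : 0 < k) (hε : 0 < ε)
    (hbound : ∀ x ∈ Icc a b, k * (x - c) ^ 2 ≤ g x ∨ m ≤ g x) :
    ∫ x in a..b, exp (-g x / ε) ≤ √(π / k) * √ε + (b - a) * exp (-m / ε) := by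
  have hgauss := integrable_exp_neg_mul_sub_sq_div hk hε c
  calc ∫ x in a..b, exp (-g x / ε)
      ≤ ∫ x in a..b, (exp (-(k * (x - c) ^ 2) / ε) + exp (-m / ε)) := by
        refine intervalIntegral.integral_mono_on hab
          ((hg.neg.div_const ε).rexp.intervalIntegrable_of_Icc hab)
          ((hgauss.intervalIntegrable).add intervalIntegrable_const) fun x hx => ?_
        rcases hbound x hx with h | h
        · exact le_add_of_le_of_nonneg (exp_le_exp.2 (by gcongr)) (exp_pos _).le
        · exact le_add_of_nonneg_of_le (exp_pos _).le (exp_le_exp.2 (by gcongr))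
    _ = (∫ x in a..b, exp (-(k * (x - c) ^ 2) / ε)) + (b - a) * exp (-m / ε) := by
        rw [intervalIntegral.integral_add hgauss.intervalIntegrable intervalIntegrable_const,
          intervalIntegral.integral_const, smul_eq_mul]
    _ ≤ √(π / k) * √ε + (b - a) * exp (-m / ε) := by
        rw [← integral_exp_neg_mul_sub_sq_div hk ε c, intervalIntegral.integral_of_le hab]
        exact add_le_add_left
          (setIntegral_le_integral hgauss (ae_of_all _ fun x => (exp_pos _).le)) _

theorem tendsto_integral_exp_neg_div_div_sqrt {g : ℝ → ℝ} {a b c k : ℝ} (hc : c ∈ Ioo a b)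
    (hg : ContinuousOn g (Icc a b)) (hpos : ∀ x ∈ Icc a b, x ≠ c → 0 < g x) (hk : 0 < k)
    (hquad : (fun x => g x - k * (x - c) ^ 2) =o[𝓝 c] fun x => (x - c) ^ 2) :
    Tendsto (fun ε => (∫ x in a..b, exp (-g x / ε)) / √ε) (𝓝[>] 0) (𝓝 √(π / k)) := by
  have hL : Tendsto (fun η => √(π / (k + η))) (𝓝[>] 0) (𝓝 √(π / k)) := by
    have : ContinuousAt (fun η => √(π / (k + η))) 0 :=
      (continuousAt_const.div (continuousAt_const.add continuousAt_id) (by simp [hk.ne'])).sqrt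
    simpa using this.tendsto.mono_left nhdsWithin_le_nhds
  have hU : Tendsto (fun η => √(π / (k - η))) (𝓝[>] 0) (𝓝 √(π / k)) := by
    have : ContinuousAt (fun η => √(π / (k - η))) 0 :=
      (continuousAt_const.div (continuousAt_const.sub continuousAt_id) (by simp [hk.ne'])).sqrt
    simpa using this.tendsto.mono_left nhdsWithin_le_nhds
  refine tendsto_of_forall_eventually_squeezed hL hU ?_
  filter_upwards [Ioo_mem_nhdsGT hk] with η ⟨hη, hηk⟩
  obtain ⟨l, u, ⟨hlc, hcu⟩, hsub, hnear⟩ :=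
    exists_Icc_abs_sub_le_of_isLittleO (Ioo_mem_nhds hc.1 hc.2) hquad hη
  obtain ⟨m, hm, hfar⟩ := (isCompact_Icc.diff (isOpen_Ioo (a := l) (b := u))).exists_forall_le'
    (hg.mono sdiff_subset) (a := 0) fun x hx => hpos x hx.1 fun h => hx.2 (h ▸ ⟨hlc, hcu⟩)
  have hal : a ≤ l := (hsub ⟨le_rfl, (hlc.trans hcu).le⟩).1.le
  have hub : u ≤ b := (hsub ⟨(hlc.trans hcu).le, le_rfl⟩).2.le
  have htail : Tendsto (fun ε => √(π / (k - η)) + (b - a) * (exp (-m / ε) / √ε)) (𝓝[>] 0)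
      (𝓝 √(π / (k - η))) := by
    simpa using tendsto_const_nhds.add
      ((tendsto_exp_neg_div_div_sqrt_nhdsGT_zero hm).const_mul (b - a))
  refine ⟨fun ε => (∫ x in l..u, exp (-((k + η) * (x - c) ^ 2) / ε)) / √ε, _,
    tendsto_intervalIntegral_gaussian_div_sqrt (by positivity) hlc hcu, htail, ?_⟩
  filter_upwards [self_mem_nhdsWithin] with ε (hε : 0 < ε)
  have hsε : 0 < √ε := Real.sqrt_pos.2 hε
  constructor
  · gcongr
    refine intervalIntegral_gaussian_le_integral_exp_neg_div hal (hlc.trans hcu).le hub hg hε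
      fun x hx => ?_
    linarith [(abs_le.1 (hnear x hx)).2]
  · rw [div_le_iff₀ hsε]
    calc _ ≤ √(π / (k - η)) * √ε + (b - a) * exp (-m / ε) := by
          refine integral_exp_neg_div_le_gaussian_add_tail (c := c) (hc.1.trans hc.2).le hg
            (by linarith) hε fun x hx => ?_
          by_cases hx' : x ∈ Ioo l u
          · left
            linarith [(abs_le.1 (hnear x (Ioo_subset_Icc_self hx'))).1]
          · exact .inr (hfar x ⟨hx, hx'⟩)
      _ = _ := by field_simp

theorem laplace_method_general (a b c : ℝ) (f : ℝ → ℝ)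
    (hc : c ∈ Ioo a b)
    (hcont : ContinuousOn f (Icc a b))
    (hmin : ∀ x ∈ Icc a b, x ≠ c → f c < f x)
    (hsmooth : ∃ δ > 0, ContDiffOn ℝ 2 f (Metric.ball c δ))
    (hf'' : 0 < deriv (deriv f) c) :
    Tendsto
      (fun ε : ℝ =>
        (∫ x in a..b, Real.exp (-f x / ε)) /
          (Real.exp (-f c / ε) * Real.sqrt (2 * π * ε / deriv (deriv f) c)))
      (nhdsWithin 0 (Ioi 0)) (nhds 1) := by
  obtain ⟨δ, hδ, hsm⟩ := hsmooth
  have hcrit : deriv f c = 0 := by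
    refine IsLocalMin.deriv_eq_zero ?_
    filter_upwards [Ioo_mem_nhds hc.1 hc.2] with x hx
    rcases eq_or_ne x c with rfl | hxc
    · exact le_rfl
    · exact (hmin x (Ioo_subset_Icc_self hx) hxc).le
  have hlim := tendsto_integral_exp_neg_div_div_sqrt (g := fun x => f x - f c) hc
    (hcont.sub continuousOn_const) (fun x hx hxc => sub_pos.2 (hmin x hx hxc)) (half_pos hf'')
    (hsm.isLittleO_sub_sub_half_deriv_deriv_mul_sq Metric.isOpen_ball (Metric.mem_ball_self hδ)
      hcrit)
  rw [← div_self (by positivity : √(π / (deriv (deriv f) c / 2)) ≠ 0)]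
  refine (hlim.div_const _).congr' ?_
  filter_upwards [self_mem_nhdsWithin] with ε (hε : 0 < ε)
  have hnum : ∫ x in a..b, exp (-f x / ε) =
      exp (-f c / ε) * ∫ x in a..b, exp (-(f x - f c) / ε) := by
    rw [← intervalIntegral.integral_const_mul]
    congr 1 with x
    rw [← exp_add]
    ring_nf
  have hden : √(2 * π * ε / deriv (deriv f) c) = √ε * √(π / (deriv (deriv f) c / 2)) := by
    rw [← sqrt_mul hε.le]
    congr 1
    field_simp
  rw [hnum, hden]
  field_simp

/-- Laplace's method, leading order: if f has a unique strict interior minimum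
at c, is C² near c with f''(c) > 0, then
∫_a^b e^{-f/ε} ~ e^{-f(c)/ε} √(2πε/f''(c)) as ε → 0⁺. -/
theorem laplace_method (a b c : ℝ) (f : ℝ → ℝ)
    (hab : a < b) (hc : c ∈ Ioo a b)
    (hcont : ContinuousOn f (Icc a b))
    (hmin : ∀ x ∈ Icc a b, x ≠ c → f c < f x)
    (hsmooth : ∃ δ > 0, ContDiffOn ℝ 2 f (Metric.ball c δ))
    (hf'' : 0 < deriv (deriv f) c) :
    Tendsto
      (fun ε : ℝ =>
        (∫ x in a..b, Real.exp (-f x / ε)) /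
          (Real.exp (-f c / ε) * Real.sqrt (2 * π * ε / deriv (deriv f) c)))
      (nhdsWithin 0 (Ioi 0)) (nhds 1) :=
  laplace_method_general a b c f hc hcont hmin hsmooth hf''
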